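/- Let L ≥ 2 be an integer, N = 2^L, ℓ ∈ {1,…,L−1}, and A ∈ ℂ^{N×N}. Then the infimum over M in the ℓ-th Monarch class (i.e., M = XY with supp(X) ⊆ supp(S_1⋯S_ℓ) and supp(Y) ⊆ supp(S_{ℓ+1}⋯S_L)) of ‖A − M‖_F² equals the sum over i ∈ {1,…,N/2^ℓ} and j ∈ {1,…,2^ℓ} of the infimum over column vectors x indexed by R^(ℓ)_i and y indexed by C^(ℓ)_j of ‖A_{R^(ℓ)_i, C^(ℓ)_j} − x y*‖_F², where y* denotes the conjugate transpose of y. -/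

import Mathlib

open Matrix Kronecker

/-- The `n × n` all-ones matrix `J_n`. -/
def Jmat (n : ℕ) : Matrix (Fin n) (Fin n) ℂ := Matrix.of fun _ _ => 1

lemma two_pow_div (L ℓ : ℕ) (h : ℓ ≤ L) : 2 ^ L / 2 ^ ℓ = 2 ^ (L - ℓ) :=
  Nat.pow_div h (by norm_num)

lemma two_pow_mul_div (L ℓ : ℕ) (h : ℓ ≤ L) : 2 ^ ℓ * (2 ^ L / 2 ^ ℓ) = 2 ^ L :=
  Nat.mul_div_cancel' (pow_dvd_pow 2 h)

lemma bfly_dim (L ℓ : ℕ) (h1 : 1 ≤ ℓ) (h2 : ℓ ≤ L) :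
    2 ^ (ℓ - 1) * (2 * (2 ^ L / 2 ^ ℓ)) = 2 ^ L := by
  rw [two_pow_div L ℓ h2, show (2 : ℕ) * 2 ^ (L - ℓ) = 2 ^ (L - ℓ + 1) by rw [pow_succ]; ring,
    ← pow_add]
  congr 1
  omega

/-- Reindexing equivalence `Fin 2^(ℓ-1) × (Fin 2 × Fin (2^L/2^ℓ)) ≃ Fin 2^L`,
sending `(a, (b, c))` to the lexicographic index `a·(2·2^L/2^ℓ) + b·(2^L/2^ℓ) + c`. -/
def bflyEquiv (L ℓ : ℕ) (h1 : 1 ≤ ℓ) (h2 : ℓ ≤ L) :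
    Fin (2 ^ (ℓ - 1)) × (Fin 2 × Fin (2 ^ L / 2 ^ ℓ)) ≃ Fin (2 ^ L) :=
  ((Equiv.refl _).prodCongr finProdFinEquiv).trans
    (finProdFinEquiv.trans (finCongr (bfly_dim L ℓ h1 h2)))

/-- The butterfly support `S_ℓ = I_{2^{ℓ-1}} ⊗ J_2 ⊗ I_{N/2^ℓ}`, as an `N × N` matrix,
`N = 2^L`. -/
def bflySupp (L ℓ : ℕ) (h1 : 1 ≤ ℓ) (h2 : ℓ ≤ L) : Matrix (Fin (2 ^ L)) (Fin (2 ^ L)) ℂ :=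
  Matrix.reindex (bflyEquiv L ℓ h1 h2) (bflyEquiv L ℓ h1 h2)
    ((1 : Matrix (Fin (2 ^ (ℓ - 1))) (Fin (2 ^ (ℓ - 1))) ℂ) ⊗ₖ
      (Jmat 2 ⊗ₖ (1 : Matrix (Fin (2 ^ L / 2 ^ ℓ)) (Fin (2 ^ L / 2 ^ ℓ)) ℂ)))

/-- Reindexing equivalence `Fin 2^ℓ × Fin (2^L/2^ℓ) ≃ Fin 2^L` (lexicographic). -/
def blockEquiv (L ℓ : ℕ) (h : ℓ ≤ L) : Fin (2 ^ ℓ) × Fin (2 ^ L / 2 ^ ℓ) ≃ Fin (2 ^ L) :=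
  finProdFinEquiv.trans (finCongr (two_pow_mul_div L ℓ h))

/-- The matrix `J_{2^ℓ} ⊗ I_{N/2^ℓ}`, as an `N × N` matrix, `N = 2^L`. -/
def JkronI (L ℓ : ℕ) (h : ℓ ≤ L) : Matrix (Fin (2 ^ L)) (Fin (2 ^ L)) ℂ :=
  Matrix.reindex (blockEquiv L ℓ h) (blockEquiv L ℓ h)
    (Jmat (2 ^ ℓ) ⊗ₖ (1 : Matrix (Fin (2 ^ L / 2 ^ ℓ)) (Fin (2 ^ L / 2 ^ ℓ)) ℂ))

/-- The matrix `I_{2^ℓ} ⊗ J_{N/2^ℓ}`, as an `N × N` matrix, `N = 2^L`. -/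
def IkronJ (L ℓ : ℕ) (h : ℓ ≤ L) : Matrix (Fin (2 ^ L)) (Fin (2 ^ L)) ℂ :=
  Matrix.reindex (blockEquiv L ℓ h) (blockEquiv L ℓ h)
    ((1 : Matrix (Fin (2 ^ ℓ)) (Fin (2 ^ ℓ)) ℂ) ⊗ₖ Jmat (2 ^ L / 2 ^ ℓ))

/-- The `k`-th element of the canonical row index set `R^(ℓ)_i` (0-based):
`i + k·(N/2^ℓ)`, for `i ∈ Fin (N/2^ℓ)`, `k ∈ Fin 2^ℓ`, `N = 2^L`. -/
def rowIdx (L ℓ : ℕ) (h : ℓ ≤ L) (i : Fin (2 ^ L / 2 ^ ℓ)) (k : Fin (2 ^ ℓ)) : Fin (2 ^ L) :=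
  ⟨(i : ℕ) + (k : ℕ) * (2 ^ L / 2 ^ ℓ), by
    have hi := i.isLt
    have hk := k.isLt
    calc (i : ℕ) + (k : ℕ) * (2 ^ L / 2 ^ ℓ)
        < 2 ^ L / 2 ^ ℓ + (k : ℕ) * (2 ^ L / 2 ^ ℓ) := by omega
      _ = ((k : ℕ) + 1) * (2 ^ L / 2 ^ ℓ) := by ring
      _ ≤ 2 ^ ℓ * (2 ^ L / 2 ^ ℓ) := Nat.mul_le_mul_right _ (by omega)
      _ = 2 ^ L := two_pow_mul_div L ℓ h⟩

/-- The `k`-th element of the canonical column index set `C^(ℓ)_j` (0-based):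
`j·(N/2^ℓ) + k`, for `j ∈ Fin 2^ℓ`, `k ∈ Fin (N/2^ℓ)`, `N = 2^L`. -/
def colIdx (L ℓ : ℕ) (h : ℓ ≤ L) (j : Fin (2 ^ ℓ)) (k : Fin (2 ^ L / 2 ^ ℓ)) : Fin (2 ^ L) :=
  ⟨(j : ℕ) * (2 ^ L / 2 ^ ℓ) + (k : ℕ), by
    have hj := j.isLt
    have hk := k.isLt
    calc (j : ℕ) * (2 ^ L / 2 ^ ℓ) + (k : ℕ)
        < (j : ℕ) * (2 ^ L / 2 ^ ℓ) + (2 ^ L / 2 ^ ℓ) := by omega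
      _ = ((j : ℕ) + 1) * (2 ^ L / 2 ^ ℓ) := by ring
      _ ≤ 2 ^ ℓ * (2 ^ L / 2 ^ ℓ) := Nat.mul_le_mul_right _ (by omega)
      _ = 2 ^ L := two_pow_mul_div L ℓ h⟩

/-- The squared Frobenius norm `‖A‖_F²` of a complex matrix. -/
noncomputable def frobSq {m n : Type*} [Fintype m] [Fintype n] (A : Matrix m n ℂ) : ℝ :=
  ∑ i, ∑ j, ‖A i j‖ ^ 2

/-! Write an index of `Fin N` as `(q, r) ∈ Fin 2^ℓ × Fin (N/2^ℓ)` (quotient and remainder by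
`N/2^ℓ`). The products `S_1 ⋯ S_ℓ` and `S_{ℓ+1} ⋯ S_L` are `J ⊗ I` and `I ⊗ J`: each `S_k` links
indices differing in one binary digit, and the digit ranges compose with a unique intermediate
index. So `X` only links indices with equal `r`, `Y` only indices with equal `q`, and the block
`(r, q')` of `XY` (rows `(·, r)`, columns `(q', ·)`) is the rank-one matrix
`X_{(·,r),(q',r)} Y_{(q',r),(q',·)}`. The blocks can be chosen independently, the squared Frobenius
norm is the sum over the blocks, and the infimum of a sum of independent terms is the sum of the
infima. -/

open scoped Pointwise

section SInf

variable {M : Type*} [ConditionallyCompleteLattice M] [AddCommGroup M] [AddLeftMono M]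

lemma csInf_finsetSum {ι : Type*} (s : Finset ι) {T : ι → Set M}
    (hne : ∀ i ∈ s, (T i).Nonempty) (hbdd : ∀ i ∈ s, BddBelow (T i)) :
    sInf (∑ i ∈ s, T i) = ∑ i ∈ s, sInf (T i) := by
  classical
  suffices (∑ i ∈ s, T i).Nonempty ∧ BddBelow (∑ i ∈ s, T i) ∧
      sInf (∑ i ∈ s, T i) = ∑ i ∈ s, sInf (T i) from this.2.2
  induction s using Finset.induction_on with
  | empty => exact ⟨Set.zero_nonempty, by simp [← Set.singleton_zero], by simp⟩
  | insert i s hi ih =>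
    simp only [Finset.forall_mem_insert] at hne hbdd
    obtain ⟨hne', hbdd', hinf⟩ := ih hne.2 hbdd.2
    simp only [Finset.sum_insert hi]
    exact ⟨hne.1.add hne', hbdd.1.add hbdd', by rw [csInf_add hne.1 hbdd.1 hne' hbdd', hinf]⟩

end SInf

section Frobenius

variable {m n m' n' : Type*} [Fintype m] [Fintype n] [Fintype m'] [Fintype n']

lemma frobSq_nonneg (A : Matrix m n ℂ) : 0 ≤ frobSq A := by
  unfold frobSq; positivity

lemma frobSq_submatrix_equiv (A : Matrix m n ℂ) (e₁ : m' ≃ m) (e₂ : n' ≃ n) :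
    frobSq (A.submatrix e₁ e₂) = frobSq A := by
  simp only [frobSq, submatrix_apply]
  rw [← e₁.sum_comp]
  exact Finset.sum_congr rfl fun i _ => e₂.sum_comp fun j => ‖A (e₁ i) j‖ ^ 2

lemma frobSq_eq_sum_blocks {P Q : Type*} [Fintype P] [Fintype Q] (A : Matrix (P × Q) (P × Q) ℂ) :
    frobSq A = ∑ i : Q, ∑ j : P, frobSq (A.submatrix (·, i) (j, ·)) := by
  simp only [frobSq, submatrix_apply, Fintype.sum_prod_type]
  rw [Finset.sum_comm]
  refine Finset.sum_congr rfl fun i _ => ?_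
  rw [Finset.sum_comm]

end Frobenius

section MonarchBlocks

variable {P Q R : Type*} [Fintype P] [Fintype Q]

lemma mul_apply_of_support [NonUnitalNonAssocSemiring R] {X Y : Matrix (P × Q) (P × Q) R}
    (hX : ∀ a b, X a b ≠ 0 → a.2 = b.2) (hY : ∀ a b, Y a b ≠ 0 → a.1 = b.1)
    (k j : P) (i k' : Q) :
    (X * Y) (k, i) (j, k') = X (k, i) (j, i) * Y (j, i) (j, k') := by
  rw [mul_apply]
  refine Fintype.sum_eq_single (j, i) fun c hc => ?_
  by_cases hx : X (k, i) c = 0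
  · rw [hx, zero_mul]
  by_cases hy : Y c (j, k') = 0
  · rw [hy, mul_zero]
  exact (hc (Prod.ext (hY c (j, k') hy) (hX (k, i) c hx).symm)).elim

lemma exists_mul_apply_eq_of_blocks [NonUnitalNonAssocSemiring R]
    (x : Q → P → P → R) (y : Q → P → Q → R) :
    ∃ X Y : Matrix (P × Q) (P × Q) R,
      (∀ a b, X a b ≠ 0 → a.2 = b.2) ∧ (∀ a b, Y a b ≠ 0 → a.1 = b.1) ∧
      ∀ i j k k', (X * Y) (k, i) (j, k') = x i j k * y i j k' := by
  classical
  let X : Matrix (P × Q) (P × Q) R := of fun a b => if a.2 = b.2 then x a.2 b.1 a.1 else 0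
  let Y : Matrix (P × Q) (P × Q) R := of fun a b => if a.1 = b.1 then y a.2 a.1 b.2 else 0
  have hX : ∀ a b, X a b ≠ 0 → a.2 = b.2 := fun a b h => by_contra fun hne => h (if_neg hne)
  have hY : ∀ a b, Y a b ≠ 0 → a.1 = b.1 := fun a b h => by_contra fun hne => h (if_neg hne)
  refine ⟨X, Y, hX, hY, fun i j k k' => ?_⟩
  rw [mul_apply_of_support hX hY]
  simp [X, Y]

lemma setOf_frobSq_sub_mul_eq_sum (B : Matrix (P × Q) (P × Q) ℂ) :
    {t : ℝ | ∃ X Y : Matrix (P × Q) (P × Q) ℂ, (∀ a b, X a b ≠ 0 → a.2 = b.2) ∧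
        (∀ a b, Y a b ≠ 0 → a.1 = b.1) ∧ t = frobSq (B - X * Y)} =
      ∑ p : Q × P, {t : ℝ | ∃ (x : P → ℂ) (y : Q → ℂ),
        t = frobSq (B.submatrix (·, p.1) (p.2, ·) - vecMulVec x (star y))} := by
  ext t
  rw [Set.mem_fintype_sum]
  constructor
  · rintro ⟨X, Y, hX, hY, rfl⟩
    refine ⟨fun p => frobSq ((B - X * Y).submatrix (·, p.1) (p.2, ·)), fun p => ?_, ?_⟩
    · refine ⟨fun k => X (k, p.1) (p.2, p.1), star fun k' => Y (p.2, p.1) (p.2, k'), ?_⟩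
      refine congrArg frobSq ?_
      ext k k'
      simp [mul_apply_of_support hX hY, vecMulVec_apply]
    · rw [frobSq_eq_sum_blocks, Fintype.sum_prod_type]
  · rintro ⟨g, hg, rfl⟩
    choose x y hxy using hg
    obtain ⟨X, Y, hX, hY, hXY⟩ :=
      exists_mul_apply_eq_of_blocks (fun i j => x (i, j)) (fun i j => star (y (i, j)))
    refine ⟨X, Y, hX, hY, ?_⟩
    rw [frobSq_eq_sum_blocks, Fintype.sum_prod_type]
    refine Fintype.sum_congr _ _ fun i => Fintype.sum_congr _ _ fun j => ?_
    rw [hxy (i, j)]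
    refine congrArg frobSq ?_
    ext k k'
    simp [hXY, vecMulVec_apply]

end MonarchBlocks

section RelationMatrices

variable {n R : Type*}

def relMatrix [Zero R] [One R] (r : n → n → Prop) [DecidableRel r] : Matrix n n R :=
  of fun a b => if r a b then 1 else 0

lemma relMatrix_mul_relMatrix [Fintype n] [NonAssocSemiring R] {r₁ r₂ r₃ : n → n → Prop}
    [DecidableRel r₁] [DecidableRel r₂] [DecidableRel r₃]
    (hcomp : ∀ a b, r₃ a b ↔ ∃ c, r₁ a c ∧ r₂ c b)
    (huniq : ∀ a b c c', r₁ a c → r₂ c b → r₁ a c' → r₂ c' b → c = c') :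
    (relMatrix r₁ * relMatrix r₂ : Matrix n n R) = relMatrix r₃ := by
  ext a b
  simp only [relMatrix, mul_apply, of_apply, ite_zero_mul_ite_zero, mul_one]
  by_cases h : r₃ a b
  · obtain ⟨c, hc⟩ := (hcomp a b).1 h
    rw [if_pos h, Fintype.sum_eq_single c fun c' hc' =>
      if_neg fun h' => hc' (huniq a b c' c h'.1 h'.2 hc.1 hc.2), if_pos hc]
  · rw [if_neg h]
    exact Fintype.sum_eq_zero _ fun c => if_neg fun h' => h ((hcomp a b).2 ⟨c, h'⟩)

end RelationMatrices

section QuotRem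

/-- For `r ∣ t` powers of a base, `a` and `b` agree in every digit outside the positions between
`r` and `t`. -/
def QuotRemEq (r t a b : ℕ) : Prop := a / t = b / t ∧ a % r = b % r

instance (r t a b : ℕ) : Decidable (QuotRemEq r t a b) :=
  inferInstanceAs (Decidable (_ ∧ _))

lemma quotRemEq_self_iff {t a b : ℕ} : QuotRemEq t t a b ↔ a = b := by
  refine ⟨fun h => ?_, fun h => h ▸ ⟨rfl, rfl⟩⟩
  rw [← Nat.div_add_mod a t, ← Nat.div_add_mod b t, h.1, h.2]

variable {r s t : ℕ}

lemma quotRemEq_comp_unique {a b c c' : ℕ}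
    (h₁ : QuotRemEq s t a c) (h₂ : QuotRemEq r s c b) (h₁' : QuotRemEq s t a c')
    (h₂' : QuotRemEq r s c' b) : c = c' := by
  rw [← Nat.div_add_mod c s, ← Nat.div_add_mod c' s, h₂.1, h₂'.1, ← h₁.2, ← h₁'.2]

/-- The intermediate index is `s * (b / s) + a % s`; `s ∣ N` keeps it in `Fin N`. -/
lemma quotRemEq_iff_exists {N : ℕ} (hrs : r ∣ s) (hst : s ∣ t) (hsN : s ∣ N) (hs : 0 < s)
    (a b : Fin N) : QuotRemEq r t a b ↔ ∃ c : Fin N, QuotRemEq s t a c ∧ QuotRemEq r s c b := by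
  have hdiv : ∀ c : ℕ, c / t = c / s / (t / s) := fun c => by
    rw [Nat.div_div_eq_div_mul, Nat.mul_div_cancel' hst]
  have hmod : ∀ c : ℕ, c % s % r = c % r := fun c => Nat.mod_mod_of_dvd c hrs
  constructor
  · rintro ⟨hq, hr⟩
    set c := s * (b / s) + a % s
    have hc_div : c / s = b / s := by
      rw [Nat.mul_add_div hs, Nat.div_eq_of_lt (Nat.mod_lt _ hs), Nat.add_zero]
    have hc_mod : c % s = a % s := by rw [Nat.mul_add_mod, Nat.mod_mod]
    have hcN : c < N := Nat.lt_of_div_lt_div (hc_div ▸ Nat.div_lt_div_of_lt_of_dvd hsN b.isLt)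
    refine ⟨⟨c, hcN⟩, ⟨?_, hc_mod.symm⟩, hc_div, ?_⟩
    · rw [hq, hdiv b, hdiv c, hc_div]
    · rw [← hmod c, hc_mod, hmod, hr]
  · rintro ⟨c, ⟨hq₁, hr₁⟩, hq₂, hr₂⟩
    exact ⟨by rw [hq₁, hdiv c, hq₂, ← hdiv], by rw [← hmod a, hr₁, hmod, hr₂]⟩

end QuotRem

lemma bflySupp_eq_relMatrix (L k : ℕ) (h1 : 1 ≤ k) (h2 : k ≤ L) :
    bflySupp L k h1 h2 =
      relMatrix fun a b : Fin (2 ^ L) => QuotRemEq (2 ^ (L - k)) (2 ^ (L - k + 1)) a b := by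
  ext a b
  simp [bflySupp, bflyEquiv, relMatrix, QuotRemEq, Jmat, one_apply, Fin.ext_iff, finProdFinEquiv,
    two_pow_div L k h2, pow_succ, mul_comm, ite_and]

lemma prod_bflySupp (L u d : ℕ) (hd : u + d ≤ L) (k : Fin d → ℕ) (hk : ∀ p, k p = u + 1 + p)
    (h1 : ∀ p, 1 ≤ k p) (h2 : ∀ p, k p ≤ L) :
    (List.ofFn fun p => bflySupp L (k p) (h1 p) (h2 p)).prod =
      relMatrix fun a b : Fin (2 ^ L) => QuotRemEq (2 ^ (L - (u + d))) (2 ^ (L - u)) a b := by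
  induction d with
  | zero =>
    ext a b
    simp [relMatrix, quotRemEq_self_iff, one_apply, Fin.ext_iff]
  | succ d ih =>
    rw [List.ofFn_succ', List.concat_eq_append, List.prod_append, List.prod_singleton,
      ih (by omega) (fun p => k p.castSucc) (fun p => hk _), bflySupp_eq_relMatrix]
    have hlo : L - k (Fin.last d) = L - (u + (d + 1)) := by rw [hk]; simp; omega
    have hmid : L - k (Fin.last d) + 1 = L - (u + d) := by rw [hk]; simp; omega
    rw [hmid, hlo]
    apply relMatrix_mul_relMatrix
    · exact quotRemEq_iff_exists (pow_dvd_pow 2 (by omega)) (pow_dvd_pow 2 (by omega))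
        (pow_dvd_pow 2 (by omega)) (by positivity)
    · exact fun a b c c' h₁ h₂ h₁' h₂' => Fin.ext (quotRemEq_comp_unique h₁ h₂ h₁' h₂')

lemma JkronI_apply (L ℓ : ℕ) (h : ℓ ≤ L) (a b : Fin (2 ^ L)) :
    JkronI L ℓ h a b = if (a : ℕ) % 2 ^ (L - ℓ) = (b : ℕ) % 2 ^ (L - ℓ) then 1 else 0 := by
  simp [JkronI, blockEquiv, Jmat, one_apply, Fin.ext_iff, finProdFinEquiv, two_pow_div L ℓ h]

lemma IkronJ_apply (L ℓ : ℕ) (h : ℓ ≤ L) (a b : Fin (2 ^ L)) :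
    IkronJ L ℓ h a b = if (a : ℕ) / 2 ^ (L - ℓ) = (b : ℕ) / 2 ^ (L - ℓ) then 1 else 0 := by
  simp [IkronJ, blockEquiv, Jmat, one_apply, Fin.ext_iff, finProdFinEquiv, two_pow_div L ℓ h]

lemma prod_bflySupp_eq_JkronI (L ℓ : ℕ) (h : ℓ ≤ L) (h1 : ∀ p : Fin ℓ, 1 ≤ (p : ℕ) + 1)
    (h2 : ∀ p : Fin ℓ, (p : ℕ) + 1 ≤ L) :
    (List.ofFn fun p : Fin ℓ => bflySupp L ((p : ℕ) + 1) (h1 p) (h2 p)).prod = JkronI L ℓ h := by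
  rw [prod_bflySupp L 0 ℓ (by omega) _ (fun p => by omega)]
  ext a b
  simp [relMatrix, JkronI_apply, QuotRemEq, Nat.div_eq_of_lt a.isLt, Nat.div_eq_of_lt b.isLt]

lemma prod_bflySupp_eq_IkronJ (L ℓ : ℕ) (h : ℓ ≤ L) (h1 : ∀ p : Fin (L - ℓ), 1 ≤ ℓ + 1 + p)
    (h2 : ∀ p : Fin (L - ℓ), ℓ + 1 + p ≤ L) :
    (List.ofFn fun p : Fin (L - ℓ) => bflySupp L (ℓ + 1 + p) (h1 p) (h2 p)).prod =
      IkronJ L ℓ h := by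
  rw [prod_bflySupp L ℓ (L - ℓ) (by omega) _ (fun p => rfl)]
  ext a b
  simp [relMatrix, IkronJ_apply, QuotRemEq, Nat.mod_one, show L - (ℓ + (L - ℓ)) = 0 by omega]

lemma JkronI_blockEquiv_ne_zero_iff (L ℓ : ℕ) (h : ℓ ≤ L)
    (a b : Fin (2 ^ ℓ) × Fin (2 ^ L / 2 ^ ℓ)) :
    JkronI L ℓ h (blockEquiv L ℓ h a) (blockEquiv L ℓ h b) ≠ 0 ↔ a.2 = b.2 := by
  simp [JkronI, Jmat, one_apply]

lemma IkronJ_blockEquiv_ne_zero_iff (L ℓ : ℕ) (h : ℓ ≤ L)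
    (a b : Fin (2 ^ ℓ) × Fin (2 ^ L / 2 ^ ℓ)) :
    IkronJ L ℓ h (blockEquiv L ℓ h a) (blockEquiv L ℓ h b) ≠ 0 ↔ a.1 = b.1 := by
  simp [IkronJ, Jmat, one_apply]

lemma setOf_frobSq_sub_mul_submatrix {ι κ : Type*} [Fintype ι] [Fintype κ] (e : κ ≃ ι)
    (A SX SY : Matrix ι ι ℂ) :
    {t : ℝ | ∃ X Y : Matrix ι ι ℂ, (∀ a b, X a b ≠ 0 → SX a b ≠ 0) ∧
        (∀ a b, Y a b ≠ 0 → SY a b ≠ 0) ∧ t = frobSq (A - X * Y)} =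
      {t : ℝ | ∃ X Y : Matrix κ κ ℂ, (∀ a b, X a b ≠ 0 → SX (e a) (e b) ≠ 0) ∧
        (∀ a b, Y a b ≠ 0 → SY (e a) (e b) ≠ 0) ∧ t = frobSq (A.submatrix e e - X * Y)} := by
  ext t
  constructor
  · rintro ⟨X, Y, hX, hY, rfl⟩
    refine ⟨X.submatrix e e, Y.submatrix e e, fun a b => hX _ _, fun a b => hY _ _, ?_⟩
    rw [submatrix_mul_equiv, ← frobSq_submatrix_equiv (A - X * Y) e e]
    rfl
  · rintro ⟨X, Y, hX, hY, rfl⟩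
    refine ⟨X.submatrix e.symm e.symm, Y.submatrix e.symm e.symm, fun a b h => ?_,
      fun a b h => ?_, ?_⟩
    · simpa using hX _ _ h
    · simpa using hY _ _ h
    · rw [submatrix_mul_equiv, ← frobSq_submatrix_equiv (A - _) e e]
      refine congrArg frobSq ?_
      ext a b
      simp

lemma rowIdx_eq_blockEquiv (L ℓ : ℕ) (h : ℓ ≤ L) (i : Fin (2 ^ L / 2 ^ ℓ)) :
    rowIdx L ℓ h i = fun k => blockEquiv L ℓ h (k, i) := by
  ext k
  simp [blockEquiv, rowIdx, finProdFinEquiv, mul_comm]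

lemma colIdx_eq_blockEquiv (L ℓ : ℕ) (h : ℓ ≤ L) (j : Fin (2 ^ ℓ)) :
    colIdx L ℓ h j = fun k => blockEquiv L ℓ h (j, k) := by
  ext k
  simp [blockEquiv, colIdx, finProdFinEquiv, mul_comm, add_comm]

/-- For `L ≥ 2`, `N = 2^L`, `ℓ ∈ {1,…,L-1}` and `A ∈ ℂ^{N×N}`, the
infimum over `M = XY` in the `ℓ`-th Monarch class (`supp(X) ⊆ supp(S_1 ⋯ S_ℓ)`,
`supp(Y) ⊆ supp(S_{ℓ+1} ⋯ S_L)`) of `‖A - M‖_F²` equals the sum over `i, j` of the infimum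
over vectors `x` on `R^(ℓ)_i` and `y` on `C^(ℓ)_j` of `‖A_{R^(ℓ)_i,C^(ℓ)_j} - x y*‖_F²`. -/
theorem inf_monarch_approx (L : ℕ) (ℓ : ℕ) (hℓ2 : ℓ ≤ L - 1)
    (A : Matrix (Fin (2 ^ L)) (Fin (2 ^ L)) ℂ) :
    sInf {t : ℝ | ∃ X Y : Matrix (Fin (2 ^ L)) (Fin (2 ^ L)) ℂ,
        (∀ a b, X a b ≠ 0 →
          (List.ofFn fun p : Fin ℓ =>
            bflySupp L ((p : ℕ) + 1) (by omega) (by have := p.isLt; omega)).prod a b ≠ 0) ∧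
        (∀ a b, Y a b ≠ 0 →
          (List.ofFn fun p : Fin (L - ℓ) =>
            bflySupp L (ℓ + 1 + (p : ℕ)) (by omega) (by have := p.isLt; omega)).prod a b ≠ 0) ∧
        t = frobSq (A - X * Y)}
      = ∑ i : Fin (2 ^ L / 2 ^ ℓ), ∑ j : Fin (2 ^ ℓ),
          sInf {t : ℝ | ∃ (x : Fin (2 ^ ℓ) → ℂ) (y : Fin (2 ^ L / 2 ^ ℓ) → ℂ),
            t = frobSq
              (A.submatrix (rowIdx L ℓ (by omega) i) (colIdx L ℓ (by omega) j)
                - Matrix.vecMulVec x (star y))} := by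
  have hℓL : ℓ ≤ L := by omega
  rw [prod_bflySupp_eq_JkronI L ℓ hℓL, prod_bflySupp_eq_IkronJ L ℓ hℓL,
    setOf_frobSq_sub_mul_submatrix (blockEquiv L ℓ hℓL)]
  simp only [JkronI_blockEquiv_ne_zero_iff, IkronJ_blockEquiv_ne_zero_iff]
  rw [setOf_frobSq_sub_mul_eq_sum, csInf_finsetSum, Fintype.sum_prod_type]
  · simp only [submatrix_submatrix, Function.comp_def, ← rowIdx_eq_blockEquiv,
      ← colIdx_eq_blockEquiv]
  · exact fun p _ => ⟨_, 0, 0, rfl⟩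
  · exact fun p _ => ⟨0, by rintro t ⟨x, y, rfl⟩; exact frobSq_nonneg _⟩
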